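/- Let $0<\chi<1$, $p\in(1,1/\chi^2)$ and let $r$ lie in the open interval $I_p=\left(\frac{p-1}{2}(1-\sqrt{1-p\chi^2}),\frac{p-1}{2}(1+\sqrt{1-p\chi^2})\right)$. Then $(2pr+\chi p(p-1))^2 < 4p(p-1)(\chi pr + r(r+1))$. -/
import Mathlib

theorem stmt_0 (χ p r : ℝ) (hχ0 : 0 < χ) (hχ1 : χ < 1)
    (hp1 : 1 < p) (hp2 : p < 1 / χ ^ 2)
    (hr1 : (p - 1) / 2 * (1 - Real.sqrt (1 - p * χ ^ 2)) < r)
    (hr2 : r < (p - 1) / 2 * (1 + Real.sqrt (1 - p * χ ^ 2))) :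
    (2 * p * r + χ * p * (p - 1)) ^ 2 < 4 * p * (p - 1) * (χ * p * r + r * (r + 1)) := by
  have hχ2 : 0 < χ ^ 2 := by positivity
  have h1 : p * χ ^ 2 < 1 := by
    have := (lt_div_iff₀ hχ2).mp hp2
    linarith
  set s := Real.sqrt (1 - p * χ ^ 2) with hs
  have hs2 : s ^ 2 = 1 - p * χ ^ 2 := Real.sq_sqrt (by linarith)
  have hp0 : (0:ℝ) < p := by linarith
  have key : 0 < p * ((r - (p - 1) / 2 * (1 - s)) * ((p - 1) / 2 * (1 + s) - r)) :=
    mul_pos hp0 (mul_pos (by linarith) (by linarith))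
  have hq : p * (p - 1) ^ 2 * s ^ 2 = p * (p - 1) ^ 2 * (1 - p * χ ^ 2) := by rw [hs2]
  nlinarith [key, hq]
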